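/- Let A be a biflat Banach algebra possessing a central approximate identity. Then A is strong pseudo-amenable. -/

import Mathlib

/-!
Take `m_α = ρ(e_α)`, with `ρ` the bimodule morphism given by biflatness and `(e_α)` the central
approximate identity. As `ρ` is a bimodule map and `e_α` is central,
`a·ρ(e_α) = ρ(a e_α) = ρ(e_α a) = ρ(e_α)·a` exactly. As `π_A** ∘ ρ` is the canonical isometric
embedding `A → A**`, which respects the module actions, `π_A**(m_α)·a` is the image of
`e_α a = a e_α`, and these tend to the image of `a`.
-/

noncomputable section

open ContinuousLinearMap NormedSpace

/-- A directed index system for nets. -/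
structure DirSys : Type 1 where
  ι : Type
  le : ι → ι → Prop
  refl : ∀ i, le i i
  trans : ∀ {i j k}, le i j → le j k → le i k
  nonempty : Nonempty ι
  directed : ∀ i j, ∃ k, le i k ∧ le j k

/-- Convergence of a net indexed by a directed system, in a (pseudo)metric space. -/
def DirSys.Tendsto (D : DirSys) {X : Type*} [PseudoMetricSpace X] (m : D.ι → X) (x : X) : Prop :=
  ∀ ε : ℝ, 0 < ε → ∃ i, ∀ j, D.le i j → dist (m j) x < ε

variable (A : Type*) [NonUnitalNormedRing A] [NormedSpace ℂ A]
  [IsScalarTower ℂ A A] [SMulCommClass ℂ A A]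

/-- The continuous bilinear forms on `A`, i.e. the dual space of the projective tensor
product `A ⊗̂ A`. -/
abbrev BilForms := A →L[ℂ] StrongDual ℂ A

instance : NormedAddCommGroup (BilForms A) := inferInstance

instance : NormedSpace ℂ (BilForms A) := inferInstance

/-- The bidual `(A ⊗̂ A)**` of the projective tensor product, realized concretely as the
dual space of the space of continuous bilinear forms on `A` (the latter being canonically,
isometrically, the dual of `A ⊗̂ A`). -/
abbrev TensorBidual := StrongDual ℂ (BilForms A)

/-- The bidual `A**` of `A`. -/
abbrev Bidual := StrongDual ℂ (StrongDual ℂ A)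

variable {A}

/-- The elementary tensor `x ⊗ y`, viewed inside `(A ⊗̂ A)**` via the canonical isometric
embedding of `A ⊗̂ A` into its bidual. -/
def elemT (x y : A) : TensorBidual A :=
  (ContinuousLinearMap.apply ℂ ℂ y).comp (ContinuousLinearMap.apply ℂ (StrongDual ℂ A) x)

variable (A)

/-- The canonical isometric copy of `A ⊗̂ A` inside its bidual: the closure of the linear
span of the elementary tensors. -/
def ptp : Submodule ℂ (TensorBidual A) :=
  (Submodule.span ℂ {m : TensorBidual A | ∃ x y : A, m = elemT x y}).topologicalClosure

/-- The map `f ↦ f·a` on bilinear forms, `(f·a)(x,y) = f(ax, y)`; predual of the left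
module action of `A` on `(A ⊗̂ A)**`. -/
def leftBil (a : A) : BilForms A →L[ℂ] BilForms A :=
  (compL ℂ A A (StrongDual ℂ A)).flip (ContinuousLinearMap.mul ℂ A a)

/-- The map `f ↦ a·f` on bilinear forms, `(a·f)(x,y) = f(x, ya)`; predual of the right
module action of `A` on `(A ⊗̂ A)**`. -/
def rightBil (a : A) : BilForms A →L[ℂ] BilForms A :=
  compL ℂ A (StrongDual ℂ A) (StrongDual ℂ A)
    ((compL ℂ A A ℂ).flip ((ContinuousLinearMap.mul ℂ A).flip a))

variable {A}

/-- The left module action `a · m` of `A` on `(A ⊗̂ A)**`, extending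
`a · (x ⊗ y) = (a x) ⊗ y`. -/
def tsmulL (a : A) (m : TensorBidual A) : TensorBidual A := m.comp (leftBil A a)

/-- The right module action `m · a` of `A` on `(A ⊗̂ A)**`, extending
`(x ⊗ y) · a = x ⊗ (y a)`. -/
def tsmulR (a : A) (m : TensorBidual A) : TensorBidual A := m.comp (rightBil A a)

variable (A)

/-- The adjoint `π_A* : A* → (A ⊗̂ A)*` of the product morphism `π_A`, namely
`(π_A* f)(x, y) = f (x y)`. -/
def piStar : StrongDual ℂ A →L[ℂ] BilForms A :=
  ((compL ℂ A (A →L[ℂ] A) (StrongDual ℂ A)).flip (ContinuousLinearMap.mul ℂ A)).comp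
    (compL ℂ A A ℂ)

variable {A}

/-- The second adjoint `π_A** : (A ⊗̂ A)** → A**` of the product morphism. -/
def piSS (m : TensorBidual A) : Bidual A := m.comp (piStar A)

variable (A)

/-- The map `f ↦ f·a` on `A*`, `(f·a)(x) = f(ax)`. -/
def dualROp (a : A) : StrongDual ℂ A →L[ℂ] StrongDual ℂ A :=
  (compL ℂ A A ℂ).flip (ContinuousLinearMap.mul ℂ A a)

/-- The map `f ↦ a·f` on `A*`, `(a·f)(x) = f(xa)`. -/
def dualLOp (a : A) : StrongDual ℂ A →L[ℂ] StrongDual ℂ A :=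
  (compL ℂ A A ℂ).flip ((ContinuousLinearMap.mul ℂ A).flip a)

variable {A}

/-- The product `a · Φ` of `a ∈ A` and `Φ ∈ A**`: `(a·Φ)(f) = Φ(f·a)`. -/
def bsmulL (a : A) (Φ : Bidual A) : Bidual A := Φ.comp (dualROp A a)

/-- The product `Φ · a` of `Φ ∈ A**` and `a ∈ A`: `(Φ·a)(f) = Φ(a·f)`. -/
def bsmulR (a : A) (Φ : Bidual A) : Bidual A := Φ.comp (dualLOp A a)

/-- The canonical isometric embedding of `A` into its bidual. -/
def inclB (a : A) : Bidual A := NormedSpace.inclusionInDoubleDual ℂ A a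

variable (A)

/-- A Banach algebra `A` is *strong pseudo-amenable* if there is a (not necessarily bounded)
net `(m_α)` in `(A ⊗̂ A)**` such that `a·m_α − m_α·a → 0` and
`a·π_A**(m_α) = π_A**(m_α)·a → a` for every `a ∈ A`. -/
def StrongPseudoAmenable : Prop :=
  ∃ (D : DirSys) (m : D.ι → TensorBidual A),
    (∀ a : A, D.Tendsto (fun α => tsmulL a (m α) - tsmulR a (m α)) 0) ∧
    (∀ (a : A) (α : D.ι), bsmulL a (piSS (m α)) = bsmulR a (piSS (m α))) ∧
    (∀ a : A, D.Tendsto (fun α => bsmulR a (piSS (m α))) (inclB a))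

/-- A Banach algebra `A` is *pseudo-amenable* if there is a (not necessarily bounded)
net `(m_α)` in `A ⊗̂ A` such that `a·m_α − m_α·a → 0` and `π_A(m_α)a → a` for every `a ∈ A`. -/
def PseudoAmenable : Prop :=
  ∃ (D : DirSys) (m : D.ι → TensorBidual A),
    (∀ α, m α ∈ ptp A) ∧
    (∀ a : A, D.Tendsto (fun α => tsmulL a (m α) - tsmulR a (m α)) 0) ∧
    (∀ a : A, D.Tendsto (fun α => bsmulR a (piSS (m α))) (inclB a))

/-- A Banach algebra `A` is *pseudo-contractible* if there is a net `(m_α)` in `A ⊗̂ A`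
such that `a·m_α = m_α·a` and `π_A(m_α)a → a` for every `a ∈ A`. -/
def PseudoContractible : Prop :=
  ∃ (D : DirSys) (m : D.ι → TensorBidual A),
    (∀ α, m α ∈ ptp A) ∧
    (∀ (a : A) (α : D.ι), tsmulL a (m α) = tsmulR a (m α)) ∧
    (∀ a : A, D.Tendsto (fun α => bsmulR a (piSS (m α))) (inclB a))

/-- A Banach algebra `A` is *amenable* if it has a bounded approximate diagonal: a bounded
net `(m_α)` in `A ⊗̂ A` such that `a·m_α − m_α·a → 0` and `π_A(m_α)a → a` for every `a ∈ A`. -/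
def AmenableBanachAlgebra : Prop :=
  ∃ (D : DirSys) (m : D.ι → TensorBidual A) (C : ℝ),
    (∀ α, m α ∈ ptp A) ∧
    (∀ α, ‖m α‖ ≤ C) ∧
    (∀ a : A, D.Tendsto (fun α => tsmulL a (m α) - tsmulR a (m α)) 0) ∧
    (∀ a : A, D.Tendsto (fun α => bsmulR a (piSS (m α))) (inclB a))

end

/-- A Banach algebra `A` is *biflat* if there is a bounded `A`-bimodule morphism
`ρ : A → (A ⊗̂ A)**` with `π_A** ∘ ρ = ι_A` (the canonical embedding of `A` in `A**`). -/
def Biflat (A : Type) [NonUnitalNormedRing A] [NormedSpace ℂ A] [IsScalarTower ℂ A A]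
    [SMulCommClass ℂ A A] : Prop :=
  ∃ ρ : A →L[ℂ] TensorBidual A,
    (∀ a b : A, ρ (a * b) = tsmulL a (ρ b)) ∧
    (∀ a b : A, ρ (a * b) = tsmulR b (ρ a)) ∧
    (∀ a : A, piSS (ρ a) = inclB a)

/-- A *central approximate identity* for `A`: a net `(e_α)` with `a e_α = e_α a` for all
`a, α`, and `a e_α → a` for all `a`. -/
def CentralApproximateIdentity (A : Type) [NonUnitalNormedRing A] : Prop :=
  ∃ (D : DirSys) (e : D.ι → A),
    (∀ (a : A) (α : D.ι), a * e α = e α * a) ∧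
    (∀ a : A, D.Tendsto (fun α => a * e α) a)

namespace DirSys

variable (D : DirSys) {X Y : Type*} [PseudoMetricSpace X] [PseudoMetricSpace Y]

theorem tendsto_const (x : X) : D.Tendsto (fun _ => x) x := fun _ hε =>
  let ⟨i⟩ := D.nonempty
  ⟨i, fun _ _ => by simpa using hε⟩

variable {D}

theorem Tendsto.comp_isometry {f : X → Y} (hf : Isometry f) {m : D.ι → X} {x : X}
    (hm : D.Tendsto m x) : D.Tendsto (fun i => f (m i)) (f x) := by
  intro ε hε
  obtain ⟨i, hi⟩ := hm ε hε
  exact ⟨i, fun j hj => by simpa only [hf.dist_eq] using hi j hj⟩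

end DirSys

section BimoduleActions

variable {A : Type*} [NonUnitalNormedRing A] [NormedSpace ℂ A]

theorem isometry_inclB : Isometry (inclB : A → Bidual A) :=
  (NormedSpace.inclusionInDoubleDualLi ℂ).isometry

variable [IsScalarTower ℂ A A] [SMulCommClass ℂ A A]

theorem bsmulL_inclB (a x : A) : bsmulL a (inclB x) = inclB (a * x) := by
  ext f
  simp [bsmulL, inclB, dualROp]

theorem bsmulR_inclB (a x : A) : bsmulR a (inclB x) = inclB (x * a) := by
  ext f
  simp [bsmulR, inclB, dualLOp]

theorem tsmulL_eq_tsmulR_of_bimoduleMap {ρ : A →L[ℂ] TensorBidual A}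
    (hL : ∀ a b : A, ρ (a * b) = tsmulL a (ρ b)) (hR : ∀ a b : A, ρ (a * b) = tsmulR b (ρ a))
    {a e : A} (hae : a * e = e * a) : tsmulL a (ρ e) = tsmulR a (ρ e) := by
  rw [← hL, hae, hR]

end BimoduleActions

theorem strongPseudoAmenable_of_biflat_of_centralApproximateIdentity_general
    (A : Type) [NonUnitalNormedRing A] [NormedSpace ℂ A] [IsScalarTower ℂ A A]
    [SMulCommClass ℂ A A]
    (h1 : Biflat A) (h2 : CentralApproximateIdentity A) :
    StrongPseudoAmenable A := by
  obtain ⟨ρ, hL, hR, hπ⟩ := h1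
  obtain ⟨D, e, hcomm, hconv⟩ := h2
  refine ⟨D, fun α => ρ (e α), fun a => ?_, fun a α => ?_, fun a => ?_⟩
  · simpa only [tsmulL_eq_tsmulR_of_bimoduleMap hL hR (hcomm a _), sub_self]
      using D.tendsto_const (0 : TensorBidual A)
  · rw [hπ, bsmulL_inclB, bsmulR_inclB, hcomm]
  · simp only [hπ, bsmulR_inclB, ← hcomm]
    exact (hconv a).comp_isometry isometry_inclB

/-- A biflat Banach algebra with a central approximate identity is strong
pseudo-amenable. -/
theorem strongPseudoAmenable_of_biflat_of_centralApproximateIdentity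
    (A : Type) [NonUnitalNormedRing A] [NormedSpace ℂ A] [IsScalarTower ℂ A A]
    [SMulCommClass ℂ A A] [CompleteSpace A]
    (h1 : Biflat A) (h2 : CentralApproximateIdentity A) :
    StrongPseudoAmenable A :=
  strongPseudoAmenable_of_biflat_of_centralApproximateIdentity_general A h1 h2
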